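/- Any n-step staircase C equals B_X ∨ B_Y ∨ B_Z, the join of three maximal chains from (0,0,0) to the maximum point, obtained by the boundary tracing algorithms with search orders (x,y,z), (y,z,x), and (z,x,y) respectively. Consequently an n-step staircase has convex dimension at most 3. -/

import Mathlib

/-- Accessibility (A1) for a set of points in `ℕ³`: every nonzero point of `C`
has a point of `C` obtained by decrementing one coordinate. -/
def Accessible3 (C : Set (ℕ × ℕ × ℕ)) : Prop :=
  ∀ p ∈ C, p ≠ (0, 0, 0) →
    (1 ≤ p.1 ∧ (p.1 - 1, p.2.1, p.2.2) ∈ C) ∨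
    (1 ≤ p.2.1 ∧ (p.1, p.2.1 - 1, p.2.2) ∈ C) ∨
    (1 ≤ p.2.2 ∧ (p.1, p.2.1, p.2.2 - 1) ∈ C)

/-- Componentwise maximum (multiset union) of two points of `ℕ³`. -/
def sup3 (a b : ℕ × ℕ × ℕ) : ℕ × ℕ × ℕ :=
  (max a.1 b.1, max a.2.1 b.2.1, max a.2.2 b.2.2)

/-- Componentwise minimum (multiset intersection) of two points of `ℕ³`. -/
def inf3 (a b : ℕ × ℕ × ℕ) : ℕ × ℕ × ℕ :=
  (min a.1 b.1, min a.2.1 b.2.1, min a.2.2 b.2.2)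

/-- Componentwise order on points of `ℕ³`. -/
def le3 (a b : ℕ × ℕ × ℕ) : Prop :=
  a.1 ≤ b.1 ∧ a.2.1 ≤ b.2.1 ∧ a.2.2 ≤ b.2.2

/-- The digital cuboid with minimum corner `a` and maximum corner `b`. -/
def Cuboid (a b : ℕ × ℕ × ℕ) : Set (ℕ × ℕ × ℕ) :=
  {p | a.1 ≤ p.1 ∧ p.1 ≤ b.1 ∧ a.2.1 ≤ p.2.1 ∧ p.2.1 ≤ b.2.1 ∧
       a.2.2 ≤ p.2.2 ∧ p.2.2 ≤ b.2.2}

/-- `lo 0, hi 0`, ..., `lo (n-1), hi (n-1)` are the corners of a regular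
sequence of `n` digital cuboids. -/
def RegularSeq (n : ℕ) (lo hi : ℕ → ℕ × ℕ × ℕ) : Prop :=
  1 ≤ n ∧ lo 0 = (0, 0, 0) ∧
  (∀ i < n, le3 (lo i) (hi i) ∧ lo i ≠ hi i) ∧
  (∀ i, i + 1 < n →
    (le3 (lo i) (lo (i + 1)) ∧ lo i ≠ lo (i + 1)) ∧
    le3 (lo (i + 1)) (hi i) ∧
    (le3 (hi i) (hi (i + 1)) ∧ hi i ≠ hi (i + 1)))

/-- The `n`-step staircase determined by a (regular) sequence of cuboids. -/
def Staircase (n : ℕ) (lo hi : ℕ → ℕ × ℕ × ℕ) : Set (ℕ × ℕ × ℕ) :=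
  {p | ∃ i < n, p ∈ Cuboid (lo i) (hi i)}

open scoped Classical in
/-- One step of the boundary tracing algorithm with search order `(x,y,z)`:
decrement `x` if the result lies in `C`, else decrement `y` if the result lies
in `C`, else decrement `z`. -/
noncomputable def stepXYZ (C : Set (ℕ × ℕ × ℕ)) (p : ℕ × ℕ × ℕ) : ℕ × ℕ × ℕ :=
  if 1 ≤ p.1 ∧ (p.1 - 1, p.2.1, p.2.2) ∈ C then (p.1 - 1, p.2.1, p.2.2)
  else if 1 ≤ p.2.1 ∧ (p.1, p.2.1 - 1, p.2.2) ∈ C then (p.1, p.2.1 - 1, p.2.2)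
  else (p.1, p.2.1, p.2.2 - 1)

open scoped Classical in
/-- One step of the boundary tracing algorithm with search order `(y,z,x)`. -/
noncomputable def stepYZX (C : Set (ℕ × ℕ × ℕ)) (p : ℕ × ℕ × ℕ) : ℕ × ℕ × ℕ :=
  if 1 ≤ p.2.1 ∧ (p.1, p.2.1 - 1, p.2.2) ∈ C then (p.1, p.2.1 - 1, p.2.2)
  else if 1 ≤ p.2.2 ∧ (p.1, p.2.1, p.2.2 - 1) ∈ C then (p.1, p.2.1, p.2.2 - 1)
  else (p.1 - 1, p.2.1, p.2.2)

open scoped Classical in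
/-- One step of the boundary tracing algorithm with search order `(z,x,y)`. -/
noncomputable def stepZXY (C : Set (ℕ × ℕ × ℕ)) (p : ℕ × ℕ × ℕ) : ℕ × ℕ × ℕ :=
  if 1 ≤ p.2.2 ∧ (p.1, p.2.1, p.2.2 - 1) ∈ C then (p.1, p.2.1, p.2.2 - 1)
  else if 1 ≤ p.1 ∧ (p.1 - 1, p.2.1, p.2.2) ∈ C then (p.1 - 1, p.2.1, p.2.2)
  else (p.1, p.2.1 - 1, p.2.2)

/-- The chain produced by iterating a tracing step from the maximum point. -/
def traceChain (step : (ℕ × ℕ × ℕ) → ℕ × ℕ × ℕ) (top : ℕ × ℕ × ℕ) :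
    Set (ℕ × ℕ × ℕ) :=
  {q | ∃ i : ℕ, step^[i] top = q}


/-
The staircase is closed under componentwise maximum, because the upper corners increase along the
sequence; so the join of three of its points lies in it. Conversely, the `(x,y,z)` tracing chain
reaches every `z`-level of the staircase: it leaves the level `z = k` at a point `q` from which it
can decrease neither `x` nor `y`, and such a point lies at the lower `x`,`y`-corner of the first
cuboid containing it. Hence `q` is componentwise below every point of the staircase with `z ≥ k`.
For a point `p` of the staircase this gives a point `a ≤ p` of the chain with the same `z`. The
cyclic permutation `(x,y,z) ↦ (y,z,x)` of coordinates preserves regular sequences and conjugates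
the tracing orders `(y,z,x)` and `(z,x,y)` to `(x,y,z)`, which yields points `b, c ≤ p` of the
other two chains with the same `x` and `y` as `p` respectively; then `p = a ∨ b ∨ c`.
-/

open Function

theorem exists_iterate_eq_of_forall_lt {α : Type*} [Preorder α] [WellFoundedLT α]
    {g : α → α} {s : Set α} {x : α} (hg : ∀ p ∈ s, p ≠ x → g p ∈ s ∧ g p < p) :
    ∀ p ∈ s, ∃ N, g^[N] p = x := by
  intro p
  induction p using WellFoundedLT.induction with
  | _ p ih =>
    intro hp
    by_cases hpx : p = x
    · exact ⟨0, hpx⟩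
    obtain ⟨hgp, hlt⟩ := hg p hp hpx
    obtain ⟨N, hN⟩ := ih _ hlt hgp
    exact ⟨N + 1, hN⟩

theorem Nat.exists_le_apply_and_apply_succ_lt {β : Type*} [LinearOrder β] {f : ℕ → β}
    {c : β} {N : ℕ} (h0 : c ≤ f 0) (hN : f N < c) : ∃ i, c ≤ f i ∧ f (i + 1) < c := by
  induction N with
  | zero => exact absurd h0 hN.not_ge
  | succ N ih =>
    by_cases hc : c ≤ f N
    · exact ⟨N, hc, hN⟩
    · exact ih (not_le.mp hc)

theorem image_traceChain {f g g' : ℕ × ℕ × ℕ → ℕ × ℕ × ℕ} (h : Semiconj f g g')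
    (top : ℕ × ℕ × ℕ) : f '' traceChain g top = traceChain g' (f top) := by
  ext q
  simp only [traceChain, Set.mem_image, Set.mem_ofPred_eq]
  constructor
  · rintro ⟨_, ⟨i, rfl⟩, rfl⟩
    exact ⟨i, ((h.iterate_right i).eq top).symm⟩
  · rintro ⟨i, rfl⟩
    exact ⟨_, ⟨i, rfl⟩, (h.iterate_right i).eq top⟩

theorem cuboid_eq_Icc (a b : ℕ × ℕ × ℕ) : Cuboid a b = Set.Icc a b := by
  ext p
  simp only [Cuboid, Set.mem_Icc, Prod.le_def, Set.mem_ofPred_eq]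
  tauto

theorem mem_staircase {n : ℕ} {lo hi : ℕ → ℕ × ℕ × ℕ} {p : ℕ × ℕ × ℕ} :
    p ∈ Staircase n lo hi ↔ ∃ i < n, lo i ≤ p ∧ p ≤ hi i := by
  simp only [Staircase, cuboid_eq_Icc, Set.mem_Icc, Set.mem_ofPred_eq]

theorem eq_sup_sup_of_le {p a b c : ℕ × ℕ × ℕ} (ha : a ≤ p) (hb : b ≤ p) (hc : c ≤ p)
    (haz : a.2.2 = p.2.2) (hbx : b.1 = p.1) (hcy : c.2.1 = p.2.1) : p = a ⊔ b ⊔ c := by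
  refine le_antisymm ?_ (sup_le (sup_le ha hb) hc)
  simp only [Prod.le_def, Prod.fst_sup, Prod.snd_sup] at *
  omega

theorem stepXYZ_eq_of_ne {C : Set (ℕ × ℕ × ℕ)} {p : ℕ × ℕ × ℕ}
    (h : (stepXYZ C p).2.2 ≠ p.2.2) :
    ¬(1 ≤ p.1 ∧ (p.1 - 1, p.2.1, p.2.2) ∈ C) ∧ ¬(1 ≤ p.2.1 ∧ (p.1, p.2.1 - 1, p.2.2) ∈ C) ∧
      stepXYZ C p = (p.1, p.2.1, p.2.2 - 1) := by
  unfold stepXYZ at h ⊢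
  split_ifs at h ⊢ with hx hy
  · exact absurd rfl h
  · exact absurd rfl h
  · exact ⟨hx, hy, rfl⟩

def rot (p : ℕ × ℕ × ℕ) : ℕ × ℕ × ℕ := (p.2.1, p.2.2, p.1)

theorem rot_injective : Injective rot := by
  rintro ⟨x, y, z⟩ ⟨x', y', z'⟩ h
  simp_all [rot]

theorem rot_le_rot {a b : ℕ × ℕ × ℕ} : rot a ≤ rot b ↔ a ≤ b := by
  simp only [rot, Prod.le_def]
  tauto

theorem rot_mem_staircase {n : ℕ} {lo hi : ℕ → ℕ × ℕ × ℕ} {p : ℕ × ℕ × ℕ} :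
    rot p ∈ Staircase n (rot ∘ lo) (rot ∘ hi) ↔ p ∈ Staircase n lo hi := by
  simp only [mem_staircase, comp_apply, rot_le_rot]

theorem semiconj_rot_stepYZX {C D : Set (ℕ × ℕ × ℕ)} (h : ∀ p, rot p ∈ D ↔ p ∈ C) :
    Semiconj rot (stepYZX C) (stepXYZ D) := by
  classical
  intro p
  have h' : ∀ x y z, (y, z, x) ∈ D ↔ (x, y, z) ∈ C := fun x y z => h (x, y, z)
  simp only [stepXYZ, stepYZX, rot, h']
  split_ifs <;> rfl

theorem semiconj_rot_stepZXY {C D : Set (ℕ × ℕ × ℕ)} (h : ∀ p, rot p ∈ D ↔ p ∈ C) :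
    Semiconj rot (stepZXY C) (stepYZX D) := by
  classical
  intro p
  have h' : ∀ x y z, (y, z, x) ∈ D ↔ (x, y, z) ∈ C := fun x y z => h (x, y, z)
  simp only [stepYZX, stepZXY, rot, h']
  split_ifs <;> rfl

theorem traceChain_subset_of_semiconj {g g' : ℕ × ℕ × ℕ → ℕ × ℕ × ℕ} {S S' : Set (ℕ × ℕ × ℕ)}
    {top : ℕ × ℕ × ℕ} (h : Semiconj rot g g') (hS : ∀ p, rot p ∈ S' ↔ p ∈ S)
    (hsub : traceChain g' (rot top) ⊆ S') : traceChain g top ⊆ S := fun a ha =>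
  (hS a).1 (hsub (image_traceChain h top ▸ Set.mem_image_of_mem rot ha))

theorem exists_mem_traceChain_of_semiconj {g g' : ℕ × ℕ × ℕ → ℕ × ℕ × ℕ}
    {S S' : Set (ℕ × ℕ × ℕ)} {top : ℕ × ℕ × ℕ} {P : ℕ × ℕ × ℕ → ℕ × ℕ × ℕ → Prop}
    (h : Semiconj rot g g') (hS : ∀ p, rot p ∈ S' ↔ p ∈ S)
    (hex : ∀ p ∈ S', ∃ a ∈ traceChain g' (rot top), a ≤ p ∧ P a p) {p : ℕ × ℕ × ℕ}
    (hp : p ∈ S) : ∃ a ∈ traceChain g top, a ≤ p ∧ P (rot a) (rot p) := by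
  obtain ⟨_, ha, hle, hP⟩ := hex (rot p) ((hS p).2 hp)
  rw [← image_traceChain h] at ha
  obtain ⟨a, ha, rfl⟩ := ha
  exact ⟨a, ha, rot_le_rot.1 hle, hP⟩

namespace RegularSeq

variable {n : ℕ} {lo hi : ℕ → ℕ × ℕ × ℕ} (hreg : RegularSeq n lo hi)
include hreg

theorem lo_mono {i j : ℕ} (hij : i ≤ j) (hj : j < n) : lo i ≤ lo j := by
  induction j, hij using Nat.le_induction with
  | base => exact le_rfl
  | succ k _ ih => exact (ih (by omega)).trans (hreg.2.2.2 k hj).1.1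

theorem hi_mono {i j : ℕ} (hij : i ≤ j) (hj : j < n) : hi i ≤ hi j := by
  induction j, hij using Nat.le_induction with
  | base => exact le_rfl
  | succ k _ ih => exact (ih (by omega)).trans (hreg.2.2.2 k hj).2.2.1

theorem top_mem : hi (n - 1) ∈ Staircase n lo hi := by
  have hn : n - 1 < n := by have := hreg.1; omega
  exact mem_staircase.2 ⟨n - 1, hn, (hreg.2.2.1 _ hn).1, le_rfl⟩

theorem le_top {p : ℕ × ℕ × ℕ} (hp : p ∈ Staircase n lo hi) : p ≤ hi (n - 1) := by
  obtain ⟨i, hin, -, hpi⟩ := mem_staircase.1 hp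
  exact hpi.trans (hreg.hi_mono (by omega) (by omega))

theorem sup_mem {p q : ℕ × ℕ × ℕ} (hp : p ∈ Staircase n lo hi) (hq : q ∈ Staircase n lo hi) :
    p ⊔ q ∈ Staircase n lo hi := by
  obtain ⟨i, hin, hlp, hph⟩ := mem_staircase.1 hp
  obtain ⟨j, hjn, hlq, hqh⟩ := mem_staircase.1 hq
  rcases le_total i j with hij | hji
  · exact mem_staircase.2
      ⟨j, hjn, hlq.trans le_sup_right, sup_le (hph.trans (hreg.hi_mono hij hjn)) hqh⟩
  · exact mem_staircase.2
      ⟨i, hin, hlp.trans le_sup_left, sup_le hph (hqh.trans (hreg.hi_mono hji hin))⟩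

theorem exists_cuboid_of_stuck {p : ℕ × ℕ × ℕ} (hp : p ∈ Staircase n lo hi)
    (hx : ¬(1 ≤ p.1 ∧ (p.1 - 1, p.2.1, p.2.2) ∈ Staircase n lo hi))
    (hy : ¬(1 ≤ p.2.1 ∧ (p.1, p.2.1 - 1, p.2.2) ∈ Staircase n lo hi)) :
    ∃ m < n, p ∈ Cuboid (lo m) (hi m) ∧ p.1 = (lo m).1 ∧ p.2.1 = (lo m).2.1 ∧
      ∀ i < m, (hi i).2.2 < p.2.2 := by
  classical
  let m := Nat.find hp
  obtain ⟨hm, hpm⟩ : m < n ∧ p ∈ Cuboid (lo m) (hi m) := Nat.find_spec hp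
  have hmin : ∀ i < m, p ∉ Cuboid (lo i) (hi i) := fun i him hpi =>
    Nat.find_min hp him ⟨by omega, hpi⟩
  simp only [Cuboid, Set.mem_ofPred_eq] at hpm hmin
  have hxm : p.1 = (lo m).1 := by
    by_contra
    exact hx ⟨by omega, m, hm, by simp only [Cuboid, Set.mem_ofPred_eq]; omega⟩
  have hym : p.2.1 = (lo m).2.1 := by
    by_contra
    exact hy ⟨by omega, m, hm, by simp only [Cuboid, Set.mem_ofPred_eq]; omega⟩
  refine ⟨m, hm, hpm, hxm, hym, fun i him => ?_⟩
  -- `p` meets every bound of the cuboid `m - 1` except possibly the upper `z`-bound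
  obtain ⟨⟨hlo, -⟩, hlohi, -⟩ := hreg.2.2.2 (m - 1) (by omega)
  rw [Nat.sub_add_cancel (by omega)] at hlo hlohi
  have hhi : hi i ≤ hi (m - 1) := hreg.hi_mono (by omega) (by omega)
  have := hmin (m - 1) (by omega)
  simp only [le3, Prod.le_def] at hlo hlohi hhi
  omega

theorem pred_z_mem_of_stuck {p : ℕ × ℕ × ℕ} (hp : p ∈ Staircase n lo hi) (h0 : p ≠ (0, 0, 0))
    (hx : ¬(1 ≤ p.1 ∧ (p.1 - 1, p.2.1, p.2.2) ∈ Staircase n lo hi))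
    (hy : ¬(1 ≤ p.2.1 ∧ (p.1, p.2.1 - 1, p.2.2) ∈ Staircase n lo hi)) :
    1 ≤ p.2.2 ∧ (p.1, p.2.1, p.2.2 - 1) ∈ Staircase n lo hi := by
  obtain ⟨m, hm, hpm, hxm, hym, hzm⟩ := hreg.exists_cuboid_of_stuck hp hx hy
  simp only [Cuboid, Set.mem_ofPred_eq] at hpm
  have hlt : (lo m).2.2 < p.2.2 := by
    rcases Nat.eq_zero_or_pos m with rfl | hm0
    · simp only [hreg.2.1, Ne, Prod.ext_iff] at hxm hym h0 ⊢
      omega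
    · have hlohi := (hreg.2.2.2 (m - 1) (by omega)).2.1
      rw [Nat.sub_add_cancel hm0] at hlohi
      have := hzm (m - 1) (by omega)
      simp only [le3] at hlohi
      omega
  exact ⟨by omega, m, hm, by simp only [Cuboid, Set.mem_ofPred_eq]; omega⟩

theorem le_of_stuck {p q : ℕ × ℕ × ℕ} (hp : p ∈ Staircase n lo hi)
    (hx : ¬(1 ≤ p.1 ∧ (p.1 - 1, p.2.1, p.2.2) ∈ Staircase n lo hi))
    (hy : ¬(1 ≤ p.2.1 ∧ (p.1, p.2.1 - 1, p.2.2) ∈ Staircase n lo hi))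
    (hq : q ∈ Staircase n lo hi) (hz : p.2.2 ≤ q.2.2) : p.1 ≤ q.1 ∧ p.2.1 ≤ q.2.1 := by
  obtain ⟨m, -, -, hxm, hym, hzm⟩ := hreg.exists_cuboid_of_stuck hp hx hy
  obtain ⟨j, hj, hlq, hqh⟩ := mem_staircase.1 hq
  by_cases hjm : j < m
  · exact absurd ((hqh.2.2.trans_lt (hzm j hjm)).trans_le hz) (lt_irrefl _)
  · have := (hreg.lo_mono (not_lt.1 hjm) hj).trans hlq
    simp only [Prod.le_def] at this
    omega

theorem stepXYZ_mem_and_lt {p : ℕ × ℕ × ℕ} (hp : p ∈ Staircase n lo hi) (h0 : p ≠ (0, 0, 0)) :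
    stepXYZ (Staircase n lo hi) p ∈ Staircase n lo hi ∧ stepXYZ (Staircase n lo hi) p < p := by
  unfold stepXYZ
  split_ifs with hx hy
  · exact ⟨hx.2, by simp only [Prod.lt_iff, Prod.le_def]; omega⟩
  · exact ⟨hy.2, by simp only [Prod.lt_iff, Prod.le_def]; omega⟩
  · obtain ⟨hz, hmem⟩ := hreg.pred_z_mem_of_stuck hp h0 hx hy
    exact ⟨hmem, by simp only [Prod.lt_iff, Prod.le_def]; omega⟩

theorem mapsTo_stepXYZ :
    Set.MapsTo (stepXYZ (Staircase n lo hi)) (Staircase n lo hi) (Staircase n lo hi) := by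
  intro p hp
  by_cases h0 : p = (0, 0, 0)
  · subst h0
    simpa [stepXYZ] using hp
  · exact (hreg.stepXYZ_mem_and_lt hp h0).1

theorem traceChain_stepXYZ_subset :
    traceChain (stepXYZ (Staircase n lo hi)) (hi (n - 1)) ⊆ Staircase n lo hi := by
  rintro _ ⟨i, rfl⟩
  exact hreg.mapsTo_stepXYZ.iterate i hreg.top_mem

theorem exists_mem_traceChain_stepXYZ {p : ℕ × ℕ × ℕ} (hp : p ∈ Staircase n lo hi) :
    ∃ a ∈ traceChain (stepXYZ (Staircase n lo hi)) (hi (n - 1)), a ≤ p ∧ a.2.2 = p.2.2 := by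
  obtain ⟨N, hN⟩ := exists_iterate_eq_of_forall_lt (fun _ hq h0 => hreg.stepXYZ_mem_and_lt hq h0)
    _ hreg.top_mem
  rcases Nat.eq_zero_or_pos p.2.2 with hz | hz
  · exact ⟨_, ⟨N, hN⟩, by simp [Prod.le_def], by simp [hz]⟩
  -- the chain leaves the level `z = p.2.2` at a point stuck in `x` and `y`
  obtain ⟨i, hle, hlt⟩ := Nat.exists_le_apply_and_apply_succ_lt
    (f := fun i => ((stepXYZ (Staircase n lo hi))^[i] (hi (n - 1))).2.2)
    (hreg.le_top hp).2.2 (by rw [hN]; exact hz)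
  simp only [iterate_succ_apply'] at hlt
  set q := (stepXYZ (Staircase n lo hi))^[i] (hi (n - 1))
  have hq : q ∈ Staircase n lo hi := hreg.traceChain_stepXYZ_subset ⟨i, rfl⟩
  obtain ⟨hx, hy, heq⟩ := stepXYZ_eq_of_ne (C := Staircase n lo hi) (p := q) (by omega)
  have hqz : q.2.2 = p.2.2 := by rw [heq] at hlt; dsimp only at hlt; omega
  obtain ⟨h1, h2⟩ := hreg.le_of_stuck hq hx hy hp hqz.le
  exact ⟨q, ⟨i, rfl⟩, ⟨h1, h2, hqz.le⟩, hqz⟩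

theorem rot_comp : RegularSeq n (rot ∘ lo) (rot ∘ hi) := by
  have hle : ∀ a b, le3 (rot a) (rot b) ↔ le3 a b := fun _ _ => rot_le_rot
  obtain ⟨hn, hlo0, hcub, hsucc⟩ := hreg
  simp only [RegularSeq, comp_apply, hle, rot_injective.ne_iff]
  exact ⟨hn, by rw [hlo0]; rfl, hcub, hsucc⟩

theorem traceChain_stepYZX_subset :
    traceChain (stepYZX (Staircase n lo hi)) (hi (n - 1)) ⊆ Staircase n lo hi :=
  traceChain_subset_of_semiconj (semiconj_rot_stepYZX fun _ => rot_mem_staircase)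
    (fun _ => rot_mem_staircase) hreg.rot_comp.traceChain_stepXYZ_subset

theorem traceChain_stepZXY_subset :
    traceChain (stepZXY (Staircase n lo hi)) (hi (n - 1)) ⊆ Staircase n lo hi :=
  traceChain_subset_of_semiconj (semiconj_rot_stepZXY fun _ => rot_mem_staircase)
    (fun _ => rot_mem_staircase) hreg.rot_comp.traceChain_stepYZX_subset

theorem exists_mem_traceChain_stepYZX {p : ℕ × ℕ × ℕ} (hp : p ∈ Staircase n lo hi) :
    ∃ b ∈ traceChain (stepYZX (Staircase n lo hi)) (hi (n - 1)), b ≤ p ∧ b.1 = p.1 :=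
  exists_mem_traceChain_of_semiconj (semiconj_rot_stepYZX fun _ => rot_mem_staircase)
    (fun _ => rot_mem_staircase) (fun _ => hreg.rot_comp.exists_mem_traceChain_stepXYZ) hp

theorem exists_mem_traceChain_stepZXY {p : ℕ × ℕ × ℕ} (hp : p ∈ Staircase n lo hi) :
    ∃ c ∈ traceChain (stepZXY (Staircase n lo hi)) (hi (n - 1)), c ≤ p ∧ c.2.1 = p.2.1 :=
  exists_mem_traceChain_of_semiconj (semiconj_rot_stepZXY fun _ => rot_mem_staircase)
    (fun _ => rot_mem_staircase) (fun _ => hreg.rot_comp.exists_mem_traceChain_stepYZX) hp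

end RegularSeq

theorem staircase_eq_join_of_three_chains (n : ℕ) (lo hi : ℕ → ℕ × ℕ × ℕ)
    (hreg : RegularSeq n lo hi) :
    Staircase n lo hi =
      {p : ℕ × ℕ × ℕ |
        ∃ a ∈ traceChain (stepXYZ (Staircase n lo hi)) (hi (n - 1)),
          ∃ b ∈ traceChain (stepYZX (Staircase n lo hi)) (hi (n - 1)),
            ∃ c ∈ traceChain (stepZXY (Staircase n lo hi)) (hi (n - 1)),
              p = sup3 (sup3 a b) c} := by
  apply Set.Subset.antisymm
  · intro p hp
    obtain ⟨a, ha, hap, haz⟩ := hreg.exists_mem_traceChain_stepXYZ hp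
    obtain ⟨b, hb, hbp, hbx⟩ := hreg.exists_mem_traceChain_stepYZX hp
    obtain ⟨c, hc, hcp, hcy⟩ := hreg.exists_mem_traceChain_stepZXY hp
    exact ⟨a, ha, b, hb, c, hc, eq_sup_sup_of_le hap hbp hcp haz hbx hcy⟩
  · rintro _ ⟨a, ha, b, hb, c, hc, rfl⟩
    exact hreg.sup_mem (hreg.sup_mem (hreg.traceChain_stepXYZ_subset ha)
      (hreg.traceChain_stepYZX_subset hb)) (hreg.traceChain_stepZXY_subset hc)
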